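/- arXiv:2205.01510 — 3 statements merged into one kernel-verified Lean document; each statement's English description precedes it below -/
import Mathlib

section
/- For the open uniform knot sequence on [0,1] with N ≥ p+1 B-splines of degree p, the B-splines B_{N,p,1}, ..., B_{N,p,N} sum to one at every point x ∈ [0,1) (partition of unity). -/
/-!
Write the Cox–de Boor recursion as `B_{q+1,n} = L_n + R_{n+1}`, where `L_m` and `R_m` are the
two weighted copies of `B_{q,m}`, with `L_m + R_m = B_{q,m}`. Summed over `a ≤ n < b` this
telescopes to `L_a + ∑_{a < n < b} B_{q,n} + R_b`, and for `x ∈ [ξ_{a+q+1}, ξ_b)` both boundary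
terms vanish because `B_{q,m}` is supported on `[ξ_m, ξ_{m+q+1})`. By induction on the degree,
`∑_{a ≤ n < b} B_{q,n} = 1` on `[ξ_{a+q}, ξ_b)` for every monotone knot sequence; for the open
uniform knots, `ξ_{p+1} = 0` and `ξ_{N+1} = 1`.
-/

noncomputable def coxDeBoor (ξ : ℕ → ℝ) : ℕ → ℕ → ℝ → ℝ
  | 0, n, x => if ξ n ≤ x ∧ x < ξ (n + 1) then 1 else 0
  | p + 1, n, x =>
      (x - ξ n) / (ξ (n + p + 1) - ξ n) * coxDeBoor ξ p n x
        + (ξ (n + p + 2) - x) / (ξ (n + p + 2) - ξ (n + 1)) * coxDeBoor ξ p (n + 1) x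

/-- Open uniform knot sequence on `[0,1]`: `ξ_1 = ⋯ = ξ_{p+1} = 0`,
`ξ_{p+i+1} = i/(N-p)`, `ξ_{N+1} = ⋯ = ξ_{N+p+1} = 1`. -/
noncomputable def openKnots (N p : ℕ) (i : ℕ) : ℝ :=
  min 1 (max 0 (((i : ℝ) - p - 1) / ((N : ℝ) - p)))

/-- B-splines on the open uniform knot sequence, made left continuous at `x = 1`. -/
noncomputable def uBspline (N p n : ℕ) (x : ℝ) : ℝ :=
  if x = 1 then (if n = N then 1 else 0) else coxDeBoor (openKnots N p) p n x

open Finset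

namespace coxDeBoor

variable {ξ : ℕ → ℝ}

lemma zero_apply (n : ℕ) (x : ℝ) :
    coxDeBoor ξ 0 n x = if x ∈ Set.Ico (ξ n) (ξ (n + 0 + 1)) then 1 else 0 := rfl

lemma succ_apply (q n : ℕ) (x : ℝ) :
    coxDeBoor ξ (q + 1) n x =
      (x - ξ n) / (ξ (n + q + 1) - ξ n) * coxDeBoor ξ q n x
        + (ξ (n + 1 + q + 1) - x) / (ξ (n + 1 + q + 1) - ξ (n + 1)) * coxDeBoor ξ q (n + 1) x := by
  rw [coxDeBoor, show n + 1 + q + 1 = n + q + 2 by omega]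

lemma eq_zero_of_notMem (hξ : Monotone ξ) {q n : ℕ} {x : ℝ}
    (hx : x ∉ Set.Ico (ξ n) (ξ (n + q + 1))) : coxDeBoor ξ q n x = 0 := by
  induction q generalizing n with
  | zero => rw [zero_apply, if_neg hx]
  | succ q ih =>
    have hL : coxDeBoor ξ q n x = 0 :=
      ih fun h ↦ hx (Set.Ico_subset_Ico le_rfl (hξ (by omega)) h)
    have hR : coxDeBoor ξ q (n + 1) x = 0 :=
      ih fun h ↦ hx (Set.Ico_subset_Ico (hξ (by omega)) (hξ (by omega)) h)
    rw [succ_apply, hL, hR, mul_zero, mul_zero, add_zero]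

lemma left_add_right (hξ : Monotone ξ) (q n : ℕ) (x : ℝ) :
    (x - ξ n) / (ξ (n + q + 1) - ξ n) * coxDeBoor ξ q n x
      + (ξ (n + q + 1) - x) / (ξ (n + q + 1) - ξ n) * coxDeBoor ξ q n x
      = coxDeBoor ξ q n x := by
  by_cases hd : ξ (n + q + 1) - ξ n = 0
  · have hsupp : Set.Ico (ξ n) (ξ (n + q + 1)) = ∅ := by
      rw [sub_eq_zero.mp hd, Set.Ico_self]
    rw [eq_zero_of_notMem hξ (hsupp ▸ Set.notMem_empty x)]
    ring
  · rw [← add_mul, ← add_div, sub_add_sub_cancel', div_self hd, one_mul]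

lemma sum_Ico_zero_eq_one (hξ : Monotone ξ) {a b : ℕ} {x : ℝ} (ha : ξ a ≤ x) (hb : x < ξ b) :
    ∑ n ∈ Ico a b, coxDeBoor ξ 0 n x = 1 := by
  induction b with
  | zero => exact absurd (hξ (Nat.zero_le a)) (by linarith)
  | succ b ih =>
    have hab : a ≤ b := by
      by_contra! h
      exact absurd (hξ (show b + 1 ≤ a by omega)) (by linarith)
    rw [sum_Ico_succ_top hab]
    by_cases hxb : x < ξ b
    · rw [ih hxb, eq_zero_of_notMem hξ (fun h ↦ hxb.not_ge h.1), add_zero]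
    · push Not at hxb
      have hlow : ∀ n ∈ Ico a b, coxDeBoor ξ 0 n x = 0 := fun n hn ↦
        eq_zero_of_notMem hξ fun h ↦ h.2.not_ge ((hξ (by simp at hn; omega)).trans hxb)
      rw [sum_eq_zero hlow, zero_apply, if_pos ⟨hxb, hb⟩, zero_add]

theorem sum_Ico_eq_one (hξ : Monotone ξ) (q : ℕ) {a b : ℕ} {x : ℝ}
    (ha : ξ (a + q) ≤ x) (hb : x < ξ b) : ∑ n ∈ Ico a b, coxDeBoor ξ q n x = 1 := by
  induction q generalizing a with
  | zero => exact sum_Ico_zero_eq_one hξ ha hb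
  | succ q ih =>
    have hab : a + 1 ≤ b := by
      by_contra! h
      exact absurd (hξ (show b ≤ a + (q + 1) by omega)) (by linarith)
    have hLa : coxDeBoor ξ q a x = 0 := eq_zero_of_notMem hξ fun h ↦ h.2.not_ge ha
    have hRb : coxDeBoor ξ q b x = 0 := eq_zero_of_notMem hξ fun h ↦ hb.not_ge h.1
    calc ∑ n ∈ Ico a b, coxDeBoor ξ (q + 1) n x
        = ∑ n ∈ Ico a b, (x - ξ n) / (ξ (n + q + 1) - ξ n) * coxDeBoor ξ q n x
          + ∑ n ∈ Ico (a + 1) (b + 1),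
              (ξ (n + q + 1) - x) / (ξ (n + q + 1) - ξ n) * coxDeBoor ξ q n x := by
          rw [← sum_Ico_add', ← sum_add_distrib]
          exact sum_congr rfl fun n _ ↦ succ_apply q n x
      _ = ∑ n ∈ Ico (a + 1) b, ((x - ξ n) / (ξ (n + q + 1) - ξ n) * coxDeBoor ξ q n x
            + (ξ (n + q + 1) - x) / (ξ (n + q + 1) - ξ n) * coxDeBoor ξ q n x) := by
          rw [sum_eq_sum_Ico_succ_bot (by omega), sum_Ico_succ_top hab, hLa, hRb, sum_add_distrib]
          ring
      _ = ∑ n ∈ Ico (a + 1) b, coxDeBoor ξ q n x :=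
          sum_congr rfl fun n _ ↦ left_add_right hξ q n x
      _ = 1 := ih (by rwa [show a + 1 + q = a + (q + 1) by omega])

end coxDeBoor

namespace openKnots

lemma monotone {N p : ℕ} (h : p ≤ N) : Monotone (openKnots N p) := by
  intro i j hij
  have hD : (0 : ℝ) ≤ N - p := sub_nonneg.mpr (by exact_mod_cast h)
  unfold openKnots
  gcongr

lemma degree_add_one (N p : ℕ) : openKnots N p (p + 1) = 0 := by
  simp [openKnots]

lemma dim_add_one {N p : ℕ} (h : p ≠ N) : openKnots N p (N + 1) = 1 := by
  have hD : (N : ℝ) - p ≠ 0 := sub_ne_zero.mpr (by exact_mod_cast h.symm)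
  unfold openKnots
  rw [show ((N + 1 : ℕ) : ℝ) - p - 1 = N - p by push_cast; ring, div_self hD]
  simp

end openKnots

/-- Partition of unity: for `N ≥ p+1`, the B-splines `B_{N,p,1}, …, B_{N,p,N}` sum to one
on `[0,1)`. -/
theorem bspline_partition_of_unity (N p : ℕ) (hN : p + 1 ≤ N) :
    ∀ x ∈ Set.Ico (0 : ℝ) 1, ∑ n ∈ Finset.Icc 1 N, uBspline N p n x = 1 := by
  rintro x ⟨hx0, hx1⟩
  simp only [uBspline, if_neg hx1.ne]
  rw [← Finset.Ico_add_one_right_eq_Icc]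
  refine coxDeBoor.sum_Ico_eq_one (openKnots.monotone (by omega)) p ?_ ?_
  · rwa [add_comm, openKnots.degree_add_one]
  · rwa [openKnots.dim_add_one (by omega)]
end

section
/- For p ≥ 1 and a knot sequence with ξ_n < ξ_{n+p+1}, the integral of B_{ξ,p,n} over [ξ_n, ξ_{n+p+1}] equals (ξ_{n+p+1} - ξ_n)/(p+1). -/
open scoped Nat
open MeasureTheory

lemma inv_mul_cancel_left_of_imp {G₀ : Type*} [GroupWithZero G₀] {a b : G₀}
    (h : a = 0 → b = 0) : a⁻¹ * (a * b) = b := by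
  by_cases ha : a = 0
  · simp [ha, h ha]
  · exact inv_mul_cancel_left₀ ha b

/-- `knotHsymm ξ k n c` is the complete homogeneous symmetric polynomial `h_k` evaluated at the
`c` consecutive knots `ξ n, …, ξ (n + c - 1)`; the recursion peels off the last knot. -/
noncomputable def knotHsymm (ξ : ℕ → ℝ) : ℕ → ℕ → ℕ → ℝ
  | 0, _, _ => 1
  | _ + 1, _, 0 => 0
  | k + 1, n, c + 1 => knotHsymm ξ (k + 1) n c + ξ (n + c) * knotHsymm ξ k n (c + 1)
termination_by k _ c => (k, c)

section

variable (ξ : ℕ → ℝ)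

@[simp] lemma knotHsymm_zero (n c : ℕ) : knotHsymm ξ 0 n c = 1 := by simp [knotHsymm]

@[simp] lemma knotHsymm_succ_zero (k n : ℕ) : knotHsymm ξ (k + 1) n 0 = 0 := by simp [knotHsymm]

lemma knotHsymm_succ_succ (k n c : ℕ) :
    knotHsymm ξ (k + 1) n (c + 1)
      = knotHsymm ξ (k + 1) n c + ξ (n + c) * knotHsymm ξ k n (c + 1) := by
  rw [knotHsymm]

lemma knotHsymm_one (k n : ℕ) : knotHsymm ξ k n 1 = ξ n ^ k := by
  induction k with
  | zero => simp
  | succ k ih => rw [knotHsymm_succ_succ, knotHsymm_succ_zero, ih, add_zero, zero_add, pow_succ']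

lemma knotHsymm_succ_succ' (k c n : ℕ) :
    knotHsymm ξ (k + 1) n (c + 1)
      = knotHsymm ξ (k + 1) (n + 1) c + ξ n * knotHsymm ξ k n (c + 1) := by
  match c, k with
  | 0, k => simp [knotHsymm_succ_succ]
  | c + 1, 0 =>
    have ih := knotHsymm_succ_succ' 0 c n
    have hlast := knotHsymm_succ_succ ξ 0 (n + 1) c
    have hlast' := knotHsymm_succ_succ ξ 0 n (c + 1)
    rw [show n + 1 + c = n + (c + 1) by omega] at hlast
    simp only [knotHsymm_zero, mul_one] at ih hlast hlast' ⊢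
    linear_combination hlast' + ih - hlast
  | c + 1, k + 1 =>
    have ih₁ := knotHsymm_succ_succ' (k + 1) c n
    have ih₂ := knotHsymm_succ_succ' k (c + 1) n
    have hlast := knotHsymm_succ_succ ξ (k + 1) (n + 1) c
    rw [show n + 1 + c = n + (c + 1) by omega] at hlast
    linear_combination knotHsymm_succ_succ ξ (k + 1) n (c + 1) + ih₁ - hlast
      + ξ (n + (c + 1)) * ih₂ - ξ n * knotHsymm_succ_succ ξ k n (c + 1)
termination_by (k, c)

lemma knotHsymm_succ_sub_succ (k c n : ℕ) :
    knotHsymm ξ (k + 1) n (c + 1) - knotHsymm ξ (k + 1) (n + 1) (c + 1)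
      = (ξ n - ξ (n + c + 1)) * knotHsymm ξ k n (c + 2) := by
  linear_combination knotHsymm_succ_succ' ξ k (c + 1) n - knotHsymm_succ_succ ξ k n (c + 1)

lemma mul_knotHsymm_sub_mul_knotHsymm (k c n : ℕ) :
    ξ n * knotHsymm ξ k n (c + 1) - ξ (n + c + 1) * knotHsymm ξ k (n + 1) (c + 1)
      = (ξ n - ξ (n + c + 1)) * knotHsymm ξ k n (c + 2) := by
  cases k with
  | zero => simp
  | succ k =>
    linear_combination ξ (n + c + 1) * knotHsymm_succ_succ' ξ k (c + 1) n
      - ξ n * knotHsymm_succ_succ ξ k n (c + 1)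

lemma sub_mul_knotHsymm_two (k n : ℕ) :
    (ξ (n + 1) - ξ n) * knotHsymm ξ k n 2 = ξ (n + 1) ^ (k + 1) - ξ n ^ (k + 1) := by
  have h := mul_knotHsymm_sub_mul_knotHsymm ξ k 0 n
  simp only [add_zero, zero_add, knotHsymm_one] at h
  linear_combination h

lemma succ_mul_knotHsymm_succ_of_const {a : ℝ} (k n c : ℕ) (hc : ∀ i < c, ξ (n + i) = a) :
    (k + 1 : ℝ) * knotHsymm ξ (k + 1) n c = a * (c + k) * knotHsymm ξ k n c := by
  match k, c with
  | k, 0 => cases k <;> simp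
  | 0, c + 1 =>
    have ih := succ_mul_knotHsymm_succ_of_const 0 n c (fun i hi => hc i (by omega))
    have hlast := knotHsymm_succ_succ ξ 0 n c
    rw [hc c (by omega)] at hlast
    simp only [knotHsymm_zero] at ih hlast ⊢
    push_cast at ih ⊢
    linear_combination hlast + ih
  | k + 1, c + 1 =>
    have ih₁ := succ_mul_knotHsymm_succ_of_const (k + 1) n c (fun i hi => hc i (by omega))
    have ih₂ := succ_mul_knotHsymm_succ_of_const k n (c + 1) hc
    have e₀ := knotHsymm_succ_succ ξ (k + 1) n c
    have e₁ := knotHsymm_succ_succ ξ k n c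
    rw [hc c (by omega)] at e₀ e₁
    push_cast at ih₁ ih₂ ⊢
    linear_combination ((k : ℝ) + 2) * e₀ + ih₁ - a * ((c : ℝ) + k + 1) * e₁ + a * ih₂
termination_by (k, c)

/-- `betaCoeff p k = k! p! / (p + k + 1)!` is the Beta integral `∫₀¹ tᵏ (1 - t)ᵖ dt`. -/
noncomputable def betaCoeff (p k : ℕ) : ℝ := (k ! * p ! : ℝ) / (p + k + 1)!

lemma betaCoeff_sub_betaCoeff_succ (p k : ℕ) :
    betaCoeff p k - betaCoeff p (k + 1) = betaCoeff (p + 1) k := by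
  simp only [betaCoeff, show p + (k + 1) + 1 = p + k + 2 by omega,
    show p + 1 + k + 1 = p + k + 2 by omega, Nat.factorial_succ]
  push_cast
  field_simp
  ring

lemma add_add_two_mul_betaCoeff_succ (p k : ℕ) :
    (p + k + 2 : ℝ) * betaCoeff p (k + 1) = (k + 1) * betaCoeff p k := by
  simp only [betaCoeff, show p + (k + 1) + 1 = p + k + 1 + 1 by omega, Nat.factorial_succ]
  push_cast
  field_simp
  ring

lemma betaCoeff_mul_knotHsymm_of_eq (hξ : Monotone ξ) (p k m : ℕ) (h : ξ (m + p + 1) = ξ m) :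
    betaCoeff p (k + 1) * knotHsymm ξ (k + 1) m (p + 2)
      = ξ m * betaCoeff p k * knotHsymm ξ k m (p + 2) := by
  have hconst := succ_mul_knotHsymm_succ_of_const ξ k m (p + 2)
    fun i hi => le_antisymm ((hξ (by omega : m + i ≤ m + p + 1)).trans h.le) (hξ (by omega))
  have hcoeff := add_add_two_mul_betaCoeff_succ p k
  refine mul_left_cancel₀ (by positivity : (k + 1 : ℝ) ≠ 0) ?_
  push_cast at hconst
  linear_combination betaCoeff p (k + 1) * hconst + ξ m * knotHsymm ξ k m (p + 2) * hcoeff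

lemma mul_coxDeBoor_zero (f : ℝ → ℝ) (n : ℕ) :
    (fun x => f x * coxDeBoor ξ 0 n x) = (Set.Ico (ξ n) (ξ (n + 1))).indicator f := by
  ext x
  simp [coxDeBoor, Set.indicator_apply]

lemma coxDeBoor_succ (p n : ℕ) (x : ℝ) :
    coxDeBoor ξ (p + 1) n x =
      (x - ξ n) / (ξ (n + p + 1) - ξ n) * coxDeBoor ξ p n x
        + (ξ (n + p + 2) - x) / (ξ (n + p + 2) - ξ (n + 1)) * coxDeBoor ξ p (n + 1) x :=
  rfl

lemma coxDeBoor_eq_zero_of_lt (hξ : Monotone ξ) (p : ℕ) {n : ℕ} {x : ℝ} (hx : x < ξ n) :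
    coxDeBoor ξ p n x = 0 := by
  induction p generalizing n with
  | zero => simp [coxDeBoor, hx.not_ge]
  | succ p ih =>
    rw [coxDeBoor_succ, ih hx, ih (hx.trans_le (hξ n.le_succ)), mul_zero, mul_zero, add_zero]

lemma coxDeBoor_eq_zero_of_le (hξ : Monotone ξ) (p : ℕ) {n : ℕ} {x : ℝ}
    (hx : ξ (n + p + 1) ≤ x) :
    coxDeBoor ξ p n x = 0 := by
  induction p generalizing n with
  | zero => simp [coxDeBoor, hx.not_gt]
  | succ p ih =>
    have hx' : ξ (n + 1 + p + 1) ≤ x := by rwa [show n + 1 + p + 1 = n + (p + 1) + 1 by omega]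
    rw [coxDeBoor_succ, ih ((hξ (by omega)).trans hx), ih hx', mul_zero, mul_zero, add_zero]

lemma integrable_mul_coxDeBoor (p : ℕ) :
    ∀ n {f : ℝ → ℝ}, Continuous f → Integrable (fun x => f x * coxDeBoor ξ p n x) := by
  induction p with
  | zero =>
    intro n f hf
    rw [mul_coxDeBoor_zero, integrable_indicator_iff measurableSet_Ico]
    exact (hf.continuousOn.integrableOn_Icc).mono_set Set.Ico_subset_Icc_self
  | succ p ih =>
    intro n f hf
    simp_rw [coxDeBoor_succ, mul_add, ← mul_assoc]
    exact (ih n (by fun_prop)).add (ih (n + 1) (by fun_prop))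

lemma integral_pow_mul_coxDeBoor_succ (p n k : ℕ) :
    ∫ x, x ^ k * coxDeBoor ξ (p + 1) n x
      = (ξ (n + p + 1) - ξ n)⁻¹ * ((∫ x, x ^ (k + 1) * coxDeBoor ξ p n x)
          - ξ n * ∫ x, x ^ k * coxDeBoor ξ p n x)
        + (ξ (n + p + 2) - ξ (n + 1))⁻¹
          * (ξ (n + p + 2) * (∫ x, x ^ k * coxDeBoor ξ p (n + 1) x)
            - ∫ x, x ^ (k + 1) * coxDeBoor ξ p (n + 1) x) := by
  have hint := fun m j => integrable_mul_coxDeBoor ξ p m (f := fun x : ℝ => x ^ j) (by fun_prop)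
  rw [← integral_const_mul, ← integral_const_mul,
    ← integral_sub (hint n (k + 1)) ((hint n k).const_mul _),
    ← integral_sub ((hint (n + 1) k).const_mul _) (hint (n + 1) (k + 1)), ← integral_const_mul,
    ← integral_const_mul, ← integral_add]
  · congr 1
    ext x
    rw [coxDeBoor_succ]
    ring
  · exact ((hint n (k + 1)).sub ((hint n k).const_mul _)).const_mul _
  · exact (((hint (n + 1) k).const_mul _).sub (hint (n + 1) (k + 1))).const_mul _

lemma integral_pow_mul_coxDeBoor_zero (n k : ℕ) (hle : ξ n ≤ ξ (n + 1)) :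
    ∫ x, x ^ k * coxDeBoor ξ 0 n x
      = (ξ (n + 1) - ξ n) * betaCoeff 0 k * knotHsymm ξ k n 2 := by
  rw [mul_coxDeBoor_zero, integral_indicator measurableSet_Ico, integral_Ico_eq_integral_Ioc,
    ← intervalIntegral.integral_of_le hle, integral_pow, mul_right_comm,
    sub_mul_knotHsymm_two, betaCoeff, Nat.factorial_zero, zero_add, Nat.factorial_succ]
  push_cast
  field_simp

theorem integral_pow_mul_coxDeBoor (hξ : Monotone ξ) (p k n : ℕ) :
    ∫ x, x ^ k * coxDeBoor ξ p n x
      = (ξ (n + p + 1) - ξ n) * betaCoeff p k * knotHsymm ξ k n (p + 2) := by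
  induction p generalizing k n with
  | zero => exact integral_pow_mul_coxDeBoor_zero ξ n k (hξ n.le_succ)
  | succ p ih =>
    have ih' := fun j => ih j (n + 1)
    rw [show n + 1 + p + 1 = n + p + 2 by omega] at ih'
    rw [integral_pow_mul_coxDeBoor_succ, ih, ih, ih', ih',
      show n + (p + 1) + 1 = n + p + 2 by omega]
    -- A collapsed window contributes `0⁻¹ * 0 = 0`, and then its bracket vanishes as well.
    have hleft := inv_mul_cancel_left_of_imp (a := ξ (n + p + 1) - ξ n)
      (b := betaCoeff p (k + 1) * knotHsymm ξ (k + 1) n (p + 2)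
        - ξ n * betaCoeff p k * knotHsymm ξ k n (p + 2)) fun hd =>
      sub_eq_zero.mpr (betaCoeff_mul_knotHsymm_of_eq ξ hξ p k n (sub_eq_zero.mp hd))
    have hright := inv_mul_cancel_left_of_imp (a := ξ (n + p + 2) - ξ (n + 1))
      (b := ξ (n + p + 2) * betaCoeff p k * knotHsymm ξ k (n + 1) (p + 2)
        - betaCoeff p (k + 1) * knotHsymm ξ (k + 1) (n + 1) (p + 2)) fun hd => by
      rw [sub_eq_zero] at hd
      rw [hd, sub_eq_zero, eq_comm, betaCoeff_mul_knotHsymm_of_eq ξ hξ p k (n + 1)]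
      rwa [show n + 1 + p + 1 = n + p + 2 by omega]
    have hdiff := knotHsymm_succ_sub_succ ξ k (p + 1) n
    have hkey := mul_knotHsymm_sub_mul_knotHsymm ξ k (p + 1) n
    rw [show p + 1 + 1 = p + 2 by omega, show n + (p + 1) + 1 = n + p + 2 by omega,
      show p + 1 + 2 = p + 3 by omega] at hdiff hkey
    linear_combination hleft + hright + betaCoeff p (k + 1) * hdiff - betaCoeff p k * hkey
      - (ξ n - ξ (n + p + 2)) * knotHsymm ξ k n (p + 3) * betaCoeff_sub_betaCoeff_succ p k

theorem intervalIntegral_coxDeBoor_eq_integral (hξ : Monotone ξ) (p n : ℕ) :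
    ∫ x in (ξ n)..(ξ (n + p + 1)), coxDeBoor ξ p n x = ∫ x, coxDeBoor ξ p n x := by
  rw [intervalIntegral.integral_of_le (hξ (by omega)), ← integral_Icc_eq_integral_Ioc]
  refine setIntegral_eq_integral_of_forall_compl_eq_zero fun x hx => ?_
  rcases not_and_or.mp hx with hlt | hgt
  · exact coxDeBoor_eq_zero_of_lt ξ hξ p (not_le.mp hlt)
  · exact coxDeBoor_eq_zero_of_le ξ hξ p (not_le.mp hgt).le

end

theorem bspline_integral_general (ξ : ℕ → ℝ) (hξ : Monotone ξ) (p n : ℕ) :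
    ∫ x in (ξ n)..(ξ (n + p + 1)), coxDeBoor ξ p n x
      = (ξ (n + p + 1) - ξ n) / ((p : ℝ) + 1) := by
  have h := integral_pow_mul_coxDeBoor ξ hξ p 0 n
  simp only [pow_zero, one_mul, knotHsymm_zero, mul_one] at h
  rw [intervalIntegral_coxDeBoor_eq_integral ξ hξ, h, betaCoeff, Nat.factorial_zero, add_zero,
    Nat.factorial_succ]
  push_cast
  field_simp

/-- The integral of `B_{ξ,p,n}` over `[ξ_n, ξ_{n+p+1}]` equals `(ξ_{n+p+1} - ξ_n)/(p+1)`. -/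
theorem bspline_integral (ξ : ℕ → ℝ) (hξ : Monotone ξ) (p n : ℕ) (hp : 1 ≤ p)
    (h : ξ n < ξ (n + p + 1)) :
    ∫ x in (ξ n)..(ξ (n + p + 1)), coxDeBoor ξ p n x
      = (ξ (n + p + 1) - ξ n) / ((p : ℝ) + 1) :=
  bspline_integral_general ξ hξ p n
end

section
/- De Boor algorithm correctness: if s(x) = Σ_{n=1}^N w_n B_{ξ,p,n}(x) and x ∈ [ξ_m, ξ_{m+1}) with p+1 ≤ m ≤ N, then applying the recursion w_{n,q+1} = ((x−ξ_n)/(ξ_{n+p−q}−ξ_n)) w_{n,q} + ((ξ_{n+p−q}−x)/(ξ_{n+p−q}−ξ_n)) w_{n−1,q} for n = m−p+q+1,...,m and q = 0,...,p−1, starting from w_{n,0} = w_n, yields s(x) = w_{m,p}. -/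
open Finset

section CoxDeBoor

variable {ξ : ℕ → ℝ} {x : ℝ}

theorem coxDeBoor_eq_zero_of_lt_knot (hξ : Monotone ξ) :
    ∀ {q n : ℕ}, x < ξ n → coxDeBoor ξ q n x = 0
  | 0, n, h => by
    rw [coxDeBoor, if_neg]
    exact fun hx => (h.trans_le hx.1).false
  | q + 1, n, h => by
    rw [coxDeBoor, coxDeBoor_eq_zero_of_lt_knot hξ h,
      coxDeBoor_eq_zero_of_lt_knot hξ (h.trans_le (hξ n.le_succ))]
    ring

theorem coxDeBoor_eq_zero_of_knot_le (hξ : Monotone ξ) :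
    ∀ {q n : ℕ}, ξ (n + q + 1) ≤ x → coxDeBoor ξ q n x = 0
  | 0, n, h => by
    rw [coxDeBoor, if_neg]
    exact fun hx => (hx.2.trans_le h).false
  | q + 1, n, h => by
    rw [coxDeBoor, coxDeBoor_eq_zero_of_knot_le hξ ((hξ (by omega)).trans h),
      coxDeBoor_eq_zero_of_knot_le hξ (by rwa [show n + 1 + q + 1 = n + (q + 1) + 1 by omega])]
    ring

theorem sum_mul_coxDeBoor_eq_sum_Icc (hξ : Monotone ξ) {m p : ℕ} (hx1 : ξ m ≤ x)
    (hx2 : x < ξ (m + 1)) {s : Finset ℕ} (hs : Icc (m - p) m ⊆ s) (c : ℕ → ℝ) :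
    ∑ n ∈ s, c n * coxDeBoor ξ p n x = ∑ n ∈ Icc (m - p) m, c n * coxDeBoor ξ p n x := by
  refine (sum_subset hs fun n _ hn => ?_).symm
  rw [mem_Icc, not_and_or, not_le, not_le] at hn
  rcases hn with hn | hn
  · rw [coxDeBoor_eq_zero_of_knot_le hξ ((hξ (by omega)).trans hx1), mul_zero]
  · rw [coxDeBoor_eq_zero_of_lt_knot hξ (hx2.trans_le (hξ hn)), mul_zero]

theorem sum_mul_coxDeBoor_succ (hξ : Monotone ξ) {a r m : ℕ} (ham : a + r + 1 = m)
    (hx1 : ξ m ≤ x) (hx2 : x < ξ (m + 1)) (c : ℕ → ℝ) :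
    ∑ n ∈ Icc a m, c n * coxDeBoor ξ (r + 1) n x =
      ∑ n ∈ Icc (a + 1) m,
        ((x - ξ n) / (ξ (n + r + 1) - ξ n) * c n
          + (ξ (n + r + 1) - x) / (ξ (n + r + 1) - ξ n) * c (n - 1)) * coxDeBoor ξ r n x := by
  set f : ℕ → ℝ := fun n => (x - ξ n) / (ξ (n + r + 1) - ξ n) * c n * coxDeBoor ξ r n x
  set g : ℕ → ℝ := fun n =>
    (ξ (n + r + 1) - x) / (ξ (n + r + 1) - ξ n) * c (n - 1) * coxDeBoor ξ r n x
  have expand : ∀ n, c n * coxDeBoor ξ (r + 1) n x = f n + g (n + 1) := fun n => by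
    simp only [f, g, coxDeBoor, show n + 1 + r + 1 = n + r + 2 by omega, Nat.add_sub_cancel]
    ring
  have hfa : f a = 0 := by
    simp only [f, coxDeBoor_eq_zero_of_knot_le hξ (ham ▸ hx1), mul_zero]
  have hgm : g (m + 1) = 0 := by
    simp only [g, coxDeBoor_eq_zero_of_lt_knot hξ hx2, mul_zero]
  have shift : ∑ n ∈ Icc a m, g (n + 1) = ∑ n ∈ Icc (a + 1) (m + 1), g n := by
    rw [← map_add_right_Icc a m 1, sum_map]
    rfl
  calc ∑ n ∈ Icc a m, c n * coxDeBoor ξ (r + 1) n x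
      = ∑ n ∈ Icc a m, f n + ∑ n ∈ Icc a m, g (n + 1) := by
        rw [← sum_add_distrib]
        exact sum_congr rfl fun n _ => expand n
    _ = ∑ n ∈ Icc (a + 1) m, (f n + g n) := by
        rw [← add_sum_Ioc_eq_sum_Icc (by omega), hfa, zero_add, shift,
          sum_Icc_succ_top (by omega), hgm, add_zero, sum_add_distrib, Icc_add_one_left_eq_Ioc]
    _ = _ := sum_congr rfl fun n _ => by simp only [f, g]; ring

theorem sum_mul_coxDeBoor_eq_deBoor (hξ : Monotone ξ) {m p : ℕ} (hpm : p ≤ m)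
    (hx1 : ξ m ≤ x) (hx2 : x < ξ (m + 1)) (w : ℕ → ℕ → ℝ)
    (hrec : ∀ q, q < p → ∀ n, m - p + q + 1 ≤ n → n ≤ m →
      w n (q + 1) =
        (x - ξ n) / (ξ (n + p - q) - ξ n) * w n q
          + (ξ (n + p - q) - x) / (ξ (n + p - q) - ξ n) * w (n - 1) q) :
    ∑ n ∈ Icc (m - p) m, w n 0 * coxDeBoor ξ p n x = w m p := by
  have invariant : ∀ q ≤ p, ∑ n ∈ Icc (m - p) m, w n 0 * coxDeBoor ξ p n x =
      ∑ n ∈ Icc (m - p + q) m, w n q * coxDeBoor ξ (p - q) n x := by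
    intro q hq
    induction q with
    | zero => rfl
    | succ q ih =>
      rw [ih (by omega), show p - q = p - q - 1 + 1 by omega,
        sum_mul_coxDeBoor_succ hξ (by omega) hx1 hx2, show m - p + (q + 1) = m - p + q + 1 by omega,
        show p - (q + 1) = p - q - 1 by omega]
      refine sum_congr rfl fun n hn => ?_
      rw [mem_Icc] at hn
      rw [hrec q (by omega) n hn.1 hn.2, show n + p - q = n + (p - q - 1) + 1 by omega]
  rw [invariant p le_rfl, Nat.sub_add_cancel hpm, Nat.sub_self, Icc_self, sum_singleton,
    coxDeBoor, if_pos ⟨hx1, hx2⟩, mul_one]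

end CoxDeBoor

theorem openKnots_monotone {N p : ℕ} (h : p < N) : Monotone (openKnots N p) := by
  intro i j hij
  have hNp : (0 : ℝ) < N - p := sub_pos.2 (by exact_mod_cast h)
  unfold openKnots
  gcongr

/-- Correctness of the de Boor algorithm: the recursively computed weight `w m p`
equals the spline value `s(x) = ∑ w_n B_{ξ,p,n}(x)` for `x ∈ [ξ_m, ξ_{m+1})`. -/
theorem deBoor_correct (N p m : ℕ) (hm1 : p + 1 ≤ m) (hm2 : m ≤ N) (x : ℝ)
    (hx1 : openKnots N p m ≤ x) (hx2 : x < openKnots N p (m + 1))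
    (w : ℕ → ℕ → ℝ)
    (hrec : ∀ q, q < p → ∀ n, m - p + q + 1 ≤ n → n ≤ m →
      w n (q + 1) =
        (x - openKnots N p n) / (openKnots N p (n + p - q) - openKnots N p n) * w n q
          + (openKnots N p (n + p - q) - x) / (openKnots N p (n + p - q) - openKnots N p n)
            * w (n - 1) q) :
    ∑ n ∈ Finset.Icc 1 N, w n 0 * coxDeBoor (openKnots N p) p n x = w m p := by
  have hξ := openKnots_monotone (N := N) (p := p) (by omega)
  rw [sum_mul_coxDeBoor_eq_sum_Icc hξ hx1 hx2 (Icc_subset_Icc (by omega) hm2)]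
  exact sum_mul_coxDeBoor_eq_deBoor hξ (by omega) hx1 hx2 w hrec
end
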